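/- Let M ≥ 3 and let 𝒞^{∧+} = {w ∈ ℝ^M : ∑_{i=1}^M w_i = 1, w ≥ 0, 2w_i ≥ w_{i-1} + w_{i+1} for 2 ≤ i ≤ M-1, w_1 ≤ w_2 ≤ … ≤ w_M} be the set of concave and nondecreasing probability vectors. Then the set of extreme points of 𝒞^{∧+} is exactly {v_1, …, v_M}, where v_1 = (1/M)·(1,…,1)ᵀ, and for 2 ≤ i ≤ M the vector v_i has coordinates v_i(m) = (m-1) r_i for 1 ≤ m ≤ i and v_i(m) = (i-1) r_i for i < m ≤ M, with r_i = 2/((2M-i)(i-1)). -/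

import Mathlib

open Finset


noncomputable def rr (M t : ℕ) : ℝ := 2 / ((2 * (M:ℝ) - ((t:ℝ) + 1)) * (t:ℝ))

noncomputable def VV (M : ℕ) (t : Fin M) : Fin M → ℝ := fun i =>
  if (t:ℕ) = 0 then 1 / (M:ℝ) else ((min (i:ℕ) (t:ℕ) : ℕ) : ℝ) * rr M (t:ℕ)

lemma rr_pos (M t : ℕ) (h1 : 1 ≤ t) (h2 : t < M) : 0 < rr M t := by
  have h3 : ((t:ℝ)) + 1 ≤ (M:ℝ) := by exact_mod_cast h2
  have h4 : (1:ℝ) ≤ (M:ℝ) := by exact_mod_cast Nat.one_le_of_lt h2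
  have h5 : (1:ℝ) ≤ (t:ℝ) := by exact_mod_cast h1
  apply div_pos (by norm_num)
  apply mul_pos (by linarith) (by linarith)

lemma sum_range_cast (n : ℕ) : ∑ i ∈ range n, (i:ℝ) = n * (n - 1) / 2 := by
  induction n with
  | zero => simp
  | succ n ih => rw [Finset.sum_range_succ, ih]; push_cast; ring

lemma sum_min (M t : ℕ) (ht : t < M) :
    ∑ i ∈ range M, ((min i t : ℕ) : ℝ) = (t:ℝ) * (t + 1) / 2 + ((M:ℝ) - t - 1) * t := by
  rw [range_eq_Ico, ← Finset.sum_Ico_consecutive _ (Nat.zero_le (t+1)) (by omega : t + 1 ≤ M)]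
  have h1 : ∑ i ∈ Finset.Ico 0 (t+1), ((min i t : ℕ) : ℝ) = ∑ i ∈ range (t+1), (i:ℝ) := by
    rw [← range_eq_Ico]
    refine Finset.sum_congr rfl fun i hi => ?_
    rw [Finset.mem_range] at hi
    rw [min_eq_left (by omega)]
  have h2 : ∑ i ∈ Finset.Ico (t+1) M, ((min i t : ℕ) : ℝ) = ∑ i ∈ Finset.Ico (t+1) M, (t:ℝ) := by
    refine Finset.sum_congr rfl fun i hi => ?_
    rw [Finset.mem_Ico] at hi
    rw [min_eq_right (by omega)]
  rw [h1, h2, sum_range_cast, Finset.sum_const, Nat.card_Ico, nsmul_eq_mul]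
  have : ((M - (t+1) : ℕ) : ℝ) = (M:ℝ) - t - 1 := by
    push_cast [Nat.cast_sub (by omega : t + 1 ≤ M)]; ring
  rw [this]; push_cast; ring

lemma sum_VV (M : ℕ) (hM : 1 ≤ M) (t : Fin M) : ∑ i, VV M t i = 1 := by
  unfold VV
  by_cases h0 : (t:ℕ) = 0
  · simp only [h0, if_pos]
    rw [Finset.sum_const, Finset.card_univ, Fintype.card_fin, nsmul_eq_mul]
    field_simp
  · simp only [h0, if_neg, if_false]
    rw [← Finset.sum_mul]
    have : ∑ i : Fin M, ((min (i:ℕ) (t:ℕ) : ℕ) : ℝ) = ∑ i ∈ range M, ((min i (t:ℕ) : ℕ) : ℝ) := by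
      exact Fin.sum_univ_eq_sum_range (fun i => ((min i (t:ℕ) : ℕ) : ℝ)) M
    rw [this, sum_min M t t.isLt]
    unfold rr
    have h3 : ((t:ℕ):ℝ) + 1 ≤ (M:ℝ) := by exact_mod_cast t.isLt
    have h5 : (1:ℝ) ≤ ((t:ℕ):ℝ) := by exact_mod_cast Nat.one_le_iff_ne_zero.2 h0
    have hne1 : (2 * (M:ℝ) - (((t:ℕ):ℝ) + 1)) ≠ 0 := by linarith
    have hne2 : ((t:ℕ):ℝ) ≠ 0 := by linarith
    field_simp
    ring

lemma telesc (D : ℕ → ℝ) (a b : ℕ) (ha : 1 ≤ a) (hab : a ≤ b) :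
    ∑ n ∈ Finset.Ico a b, (D (n-1) - D n) = D (a-1) - D (b-1) := by
  rw [Finset.sum_Ico_eq_sum_range]
  have h1 : ∀ k, D (a + k - 1) - D (a + k) = D (a - 1 + k) - D (a - 1 + (k+1)) := by
    intro k
    congr 2 <;> omega
  calc ∑ k ∈ range (b - a), (D (a + k - 1) - D (a + k))
      = ∑ k ∈ range (b - a), (D (a - 1 + k) - D (a - 1 + (k+1))) :=
        Finset.sum_congr rfl fun k _ => h1 k
    _ = D (a - 1 + 0) - D (a - 1 + (b - a)) := Finset.sum_range_sub' (fun k => D (a - 1 + k)) (b - a)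
    _ = D (a - 1) - D (b - 1) := by congr 1 <;> congr 1 <;> omega

lemma key (D : ℕ → ℝ) (M : ℕ) (hD : D (M-1) = 0) :
    ∀ i, i < M →
    ∑ n ∈ Finset.Ico 1 M, (D (n-1) - D n) * ((min i n : ℕ) : ℝ) = ∑ j ∈ range i, D j := by
  intro i
  induction i with
  | zero => intro _; simp
  | succ i ih =>
    intro hi
    have hi' : i < M := by omega
    rw [Finset.sum_range_succ, ← ih hi']
    rw [← Finset.sum_Ico_consecutive (fun n => (D (n-1) - D n) * ((min (i+1) n : ℕ) : ℝ))
        (by omega : 1 ≤ i+1) (by omega : i+1 ≤ M),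
        ← Finset.sum_Ico_consecutive (fun n => (D (n-1) - D n) * ((min i n : ℕ) : ℝ))
        (by omega : 1 ≤ i+1) (by omega : i+1 ≤ M)]
    have e1 : ∑ n ∈ Finset.Ico 1 (i+1), (D (n-1) - D n) * ((min (i+1) n : ℕ) : ℝ)
        = ∑ n ∈ Finset.Ico 1 (i+1), (D (n-1) - D n) * ((min i n : ℕ) : ℝ) := by
      refine Finset.sum_congr rfl fun n hn => ?_
      rw [Finset.mem_Ico] at hn
      rw [show min (i+1) n = n by omega, show min i n = n by omega]
    have e2 : ∑ n ∈ Finset.Ico (i+1) M, (D (n-1) - D n) * ((min (i+1) n : ℕ) : ℝ)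
        = ∑ n ∈ Finset.Ico (i+1) M, ((D (n-1) - D n) * ((min i n : ℕ) : ℝ) + (D (n-1) - D n)) := by
      refine Finset.sum_congr rfl fun n hn => ?_
      rw [Finset.mem_Ico] at hn
      rw [show min (i+1) n = i+1 by omega, show min i n = i by omega]
      push_cast; ring
    rw [e1, e2, Finset.sum_add_distrib, telesc D (i+1) M (by omega) (by omega)]
    have : D (i + 1 - 1) = D i := by congr 1
    rw [this, hD]
    ring

lemma uniq (M : ℕ) (hM : 3 ≤ M) (c : Fin M → ℝ)
    (h : ∀ i : Fin M, ∑ t, c t * VV M t i = 0) : ∀ t, c t = 0 := by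
  have hM0 : (M:ℝ) ≠ 0 := Nat.cast_ne_zero.2 (by omega)
  -- c at 0
  have c0 : c ⟨0, by omega⟩ = 0 := by
    have e := h ⟨0, by omega⟩
    rw [Finset.sum_eq_single (⟨0, by omega⟩ : Fin M)] at e
    · unfold VV at e
      simp only [show ((⟨0, by omega⟩ : Fin M) : ℕ) = 0 from rfl, if_pos rfl, ↓reduceIte] at e
      field_simp at e
      simpa using e
    · intro t _ ht
      have ht0 : (t:ℕ) ≠ 0 := fun hh => ht (Fin.ext hh)
      unfold VV
      simp only [if_neg ht0]
      simp
    · intro hn; exact absurd (Finset.mem_univ _) hn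
  -- c at middle indices
  have cmid : ∀ k : ℕ, ∀ (hk1 : 1 ≤ k) (hk2 : k ≤ M - 2), c ⟨k, by omega⟩ = 0 := by
    intro k hk1 hk2
    set ik : Fin M := ⟨k, by omega⟩ with hik
    set ikm : Fin M := ⟨k - 1, by omega⟩ with hikm
    set ikp : Fin M := ⟨k + 1, by omega⟩ with hikp
    have e : ∑ t, (2 * (c t * VV M t ik) - c t * VV M t ikm - c t * VV M t ikp) = 0 := by
      rw [Finset.sum_sub_distrib, Finset.sum_sub_distrib, ← Finset.mul_sum, h ik, h ikm, h ikp]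
      ring
    rw [Finset.sum_eq_single ik] at e
    · unfold VV at e
      have hkne : (ik:ℕ) ≠ 0 := by simp [hik]; omega
      simp only [if_neg hkne] at e
      have m1 : min k k = k := by omega
      have m2 : min (k-1) k = k - 1 := by omega
      have m3 : min (k+1) k = k := by omega
      rw [m1, m2, m3] at e
      have hc : ((k - 1 : ℕ) : ℝ) = (k:ℝ) - 1 := by
        push_cast [Nat.cast_sub (by omega : 1 ≤ k)]; ring
      rw [hc] at e
      have e' : c ik * rr M k = 0 := by linear_combination e
      have hr := rr_pos M k hk1 (by omega)
      have := mul_eq_zero.1 e'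
      rcases this with h' | h'
      · exact h'
      · exact absurd h' (ne_of_gt hr)
    · intro t _ ht
      unfold VV
      by_cases ht0 : (t:ℕ) = 0
      · simp only [if_pos ht0]; ring
      · simp only [if_neg ht0]
        have htk : (t:ℕ) ≠ k := fun hh => ht (Fin.ext hh)
        have hid : ((min (k-1) (t:ℕ) : ℕ) : ℝ) + ((min (k+1) (t:ℕ) : ℕ) : ℝ)
            = 2 * ((min k (t:ℕ) : ℕ) : ℝ) := by
          exact_mod_cast congrArg (Nat.cast : ℕ → ℝ)
            (by omega : min (k-1) (t:ℕ) + min (k+1) (t:ℕ) = 2 * min k (t:ℕ))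
        linear_combination (-(c t * rr M (t:ℕ))) * hid
    · intro hn; exact absurd (Finset.mem_univ _) hn
  -- c at last index
  have clast : c ⟨M - 1, by omega⟩ = 0 := by
    set il : Fin M := ⟨M - 1, by omega⟩ with hil
    set ilm : Fin M := ⟨M - 2, by omega⟩ with hilm
    have e : ∑ t, (c t * VV M t il - c t * VV M t ilm) = 0 := by
      rw [Finset.sum_sub_distrib, h il, h ilm]; ring
    rw [Finset.sum_eq_single il] at e
    · unfold VV at e
      have hlne : (il:ℕ) ≠ 0 := by simp [hil]; omega
      simp only [if_neg hlne] at e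
      have m1 : min (M-1) (M-1) = M - 1 := by omega
      have m2 : min (M-2) (M-1) = M - 2 := by omega
      rw [m1, m2] at e
      have hc : ((M - 1 : ℕ) : ℝ) - ((M - 2 : ℕ) : ℝ) = 1 := by
        rw [Nat.cast_sub (by omega), Nat.cast_sub (by omega)]; push_cast; ring
      have e' : c il * rr M (M-1) = 0 := by linear_combination e - c il * rr M (M-1) * hc
      have hr := rr_pos M (M-1) (by omega) (by omega)
      rcases mul_eq_zero.1 e' with h' | h'
      · exact h'
      · exact absurd h' (ne_of_gt hr)
    · intro t _ ht
      unfold VV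
      by_cases ht0 : (t:ℕ) = 0
      · simp only [if_pos ht0]; ring
      · simp only [if_neg ht0]
        have htl : (t:ℕ) ≠ M - 1 := fun hh => ht (Fin.ext hh)
        have htlt := t.isLt
        have m1 : min (M-1) (t:ℕ) = (t:ℕ) := by omega
        have m2 : min (M-2) (t:ℕ) = (t:ℕ) := by omega
        rw [m1, m2]
        ring
    · intro hn; exact absurd (Finset.mem_univ _) hn
  intro t
  by_cases hz : (t:ℕ) = 0
  · have : t = ⟨0, by omega⟩ := Fin.ext hz
    rw [this]; exact c0
  · by_cases hl : (t:ℕ) = M - 1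
    · have : t = ⟨M - 1, by omega⟩ := Fin.ext hl
      rw [this]; exact clast
    · have htlt := t.isLt
      have : t = ⟨(t:ℕ), htlt⟩ := Fin.ext rfl
      rw [this]
      exact cmid (t:ℕ) (by omega) (by omega)

lemma repr_lemma (M : ℕ) (hM : 3 ≤ M) (w : Fin M → ℝ)
    (h0 : ∀ i, 0 ≤ w i)
    (hconc : ∀ i : Fin M, ∀ (h1 : 0 < (i:ℕ)) (h2 : (i:ℕ) < M - 1),
      w ⟨(i:ℕ)-1, by have := 0; omega⟩ + w ⟨(i:ℕ)+1, by have := 0; omega⟩ ≤ 2 * w i)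
    (hmono : ∀ i j : Fin M, i ≤ j → w i ≤ w j) :
    ∃ lam : Fin M → ℝ, (∀ t, 0 ≤ lam t) ∧ ∀ i, ∑ t, lam t * VV M t i = w i := by
  have hM0 : (M:ℝ) ≠ 0 := Nat.cast_ne_zero.2 (by omega)
  set w' : ℕ → ℝ := fun j => if h : j < M then w ⟨j, h⟩ else 0 with hw'
  set D : ℕ → ℝ := fun j => if j < M - 1 then w' (j+1) - w' j else 0 with hD
  have hDlast : D (M-1) = 0 := by simp [hD]
  set lam : Fin M → ℝ := fun t =>
    if (t:ℕ) = 0 then (M:ℝ) * w' 0 else (D ((t:ℕ)-1) - D (t:ℕ)) / rr M (t:ℕ) with hlam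
  refine ⟨lam, ?_, ?_⟩
  · intro t
    by_cases ht0 : (t:ℕ) = 0
    · simp only [hlam, if_pos ht0]
      have hw0 : w' 0 = w ⟨0, by omega⟩ := dif_pos (by omega)
      rw [hw0]
      exact mul_nonneg (Nat.cast_nonneg M) (h0 _)
    · simp only [hlam, if_neg ht0]
      apply div_nonneg _ (le_of_lt (rr_pos M (t:ℕ) (by omega) t.isLt))
      by_cases htl : (t:ℕ) = M - 1
      · have e1 : D ((t:ℕ)-1) = w' (M-1) - w' (M-2) := by
          rw [htl]
          have : M - 1 - 1 = M - 2 := by omega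
          rw [this]
          simp only [hD, if_pos (by omega : M - 2 < M - 1)]
          congr 1 <;> congr 1 <;> omega
        rw [e1, htl, hDlast]
        have := hmono ⟨M-2, by omega⟩ ⟨M-1, by omega⟩ (by simp [Fin.mk_le_mk]; omega)
        simp only [hw']
        rw [dif_pos (by omega : M - 1 < M), dif_pos (by omega : M - 2 < M)]
        linarith
      · have htlt := t.isLt
        have e1 : D ((t:ℕ)-1) = w' (t:ℕ) - w' ((t:ℕ)-1) := by
          simp only [hD, if_pos (by omega : (t:ℕ) - 1 < M - 1)]
          congr 2
          omega
        have e2 : D (t:ℕ) = w' ((t:ℕ)+1) - w' (t:ℕ) := by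
          simp only [hD, if_pos (by omega : (t:ℕ) < M - 1)]
        rw [e1, e2]
        have hc := hconc t (by omega) (by omega)
        simp only [hw']
        rw [dif_pos (by omega : (t:ℕ) < M), dif_pos (by omega : (t:ℕ) - 1 < M),
            dif_pos (by omega : (t:ℕ) + 1 < M)]
        have : w ⟨(t:ℕ), by omega⟩ = w t := by congr 1
        rw [this]
        linarith
  · intro i
    set f : ℕ → ℝ := fun n =>
      (if n = 0 then (M:ℝ) * w' 0 else (D (n-1) - D n) / rr M n) *
      (if n = 0 then 1 / (M:ℝ) else ((min (i:ℕ) n : ℕ) : ℝ) * rr M n) with hf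
    have e0 : ∑ t : Fin M, lam t * VV M t i = ∑ n ∈ range M, f n := by
      rw [← Fin.sum_univ_eq_sum_range f M]
      rfl
    rw [e0]
    rw [range_eq_Ico, ← Finset.sum_Ico_consecutive f (by omega : 0 ≤ 1) (by omega : 1 ≤ M)]
    have e1 : ∑ n ∈ Finset.Ico 0 1, f n = w' 0 := by
      rw [show Finset.Ico 0 1 = {0} by rfl, Finset.sum_singleton]
      simp only [hf, if_pos rfl, ↓reduceIte]
      field_simp
    have e2 : ∑ n ∈ Finset.Ico 1 M, f n
        = ∑ n ∈ Finset.Ico 1 M, (D (n-1) - D n) * ((min (i:ℕ) n : ℕ) : ℝ) := by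
      refine Finset.sum_congr rfl fun n hn => ?_
      rw [Finset.mem_Ico] at hn
      simp only [hf, if_neg (by omega : ¬ n = 0)]
      have hr := rr_pos M n (by omega) (by omega)
      field_simp
    rw [e1, e2, key D M hDlast (i:ℕ) i.isLt]
    have e3 : ∑ j ∈ range (i:ℕ), D j = w' (i:ℕ) - w' 0 := by
      have : ∀ j ∈ range (i:ℕ), D j = w' (j+1) - w' j := by
        intro j hj
        rw [Finset.mem_range] at hj
        have := i.isLt
        simp only [hD, if_pos (by omega : j < M - 1)]
      rw [Finset.sum_congr rfl this, Finset.sum_range_sub (fun j => w' j)]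
    rw [e3]
    have : w' (i:ℕ) = w i := by
      simp only [hw']
      rw [dif_pos i.isLt]
    rw [this]
    ring

lemma VV_nonneg (M : ℕ) (hM : 1 ≤ M) (t i : Fin M) : 0 ≤ VV M t i := by
  unfold VV
  by_cases h0 : (t:ℕ) = 0
  · rw [if_pos h0]; positivity
  · rw [if_neg h0]
    exact mul_nonneg (Nat.cast_nonneg _) (le_of_lt (rr_pos M _ (by omega) t.isLt))

lemma VV_conc (M : ℕ) (hM : 3 ≤ M) (t : Fin M) (i : Fin M) (h1 : 0 < (i:ℕ))
    (h2 : (i:ℕ) < M - 1) :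
    VV M t ⟨(i:ℕ)-1, by have := 0; omega⟩ + VV M t ⟨(i:ℕ)+1, by have := 0; omega⟩ ≤ 2 * VV M t i := by
  unfold VV
  by_cases h0 : (t:ℕ) = 0
  · simp only [if_pos h0]; linarith
  · rw [if_neg h0, if_neg h0, if_neg h0]
    have hr := rr_pos M (t:ℕ) (by omega) t.isLt
    have hid : ((min ((i:ℕ)-1) (t:ℕ) : ℕ) : ℝ) + ((min ((i:ℕ)+1) (t:ℕ) : ℕ) : ℝ)
        ≤ 2 * ((min (i:ℕ) (t:ℕ) : ℕ) : ℝ) := by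
      exact_mod_cast (by omega : min ((i:ℕ)-1) (t:ℕ) + min ((i:ℕ)+1) (t:ℕ) ≤ 2 * min (i:ℕ) (t:ℕ))
    nlinarith
lemma VV_mono (M : ℕ) (hM : 1 ≤ M) (t : Fin M) (i j : Fin M) (hij : i ≤ j) :
    VV M t i ≤ VV M t j := by
  unfold VV
  by_cases h0 : (t:ℕ) = 0
  · simp [if_pos h0]
  · simp only [if_neg h0]
    have hr := rr_pos M (t:ℕ) (by omega) t.isLt
    have hij' : (i:ℕ) ≤ (j:ℕ) := hij
    have : ((min (i:ℕ) (t:ℕ) : ℕ) : ℝ) ≤ ((min (j:ℕ) (t:ℕ) : ℕ) : ℝ) := by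
      exact_mod_cast (by omega : min (i:ℕ) (t:ℕ) ≤ min (j:ℕ) (t:ℕ))
    nlinarith

/-- The extreme points of the set of concave and nondecreasing probability vectors in `ℝ^M`
(`M ≥ 3`) are exactly the `M` vectors `v_1 = (1/M)1`, and for `2 ≤ i ≤ M` (1-based) the vector
with coordinates `(m-1)r_i` for `m ≤ i` and `(i-1)r_i` for `m > i`, `r_i = 2/((2M-i)(i-1))`
(0-based vertex index `t` encodes `i = t+1`). -/
theorem stmt11 (M : ℕ) (hM : 3 ≤ M)
    (S : Set (Fin M → ℝ))
    (hS : S = {w : Fin M → ℝ | ∑ i, w i = 1 ∧ (∀ i, 0 ≤ w i) ∧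
        (∀ i : Fin M, ∀ (h1 : 0 < (i : ℕ)) (h2 : (i : ℕ) < M - 1),
          w ⟨(i : ℕ) - 1, by omega⟩ + w ⟨(i : ℕ) + 1, by omega⟩ ≤ 2 * w i) ∧
        ∀ i j : Fin M, i ≤ j → w i ≤ w j})
    (v : Fin M → (Fin M → ℝ))
    (hv : v = fun (t i : Fin M) =>
      if (t : ℕ) = 0 then 1 / (M : ℝ)
      else if (i : ℕ) ≤ (t : ℕ) then
        ((i : ℕ) : ℝ) * (2 / ((2 * (M : ℝ) - (((t : ℕ) : ℝ) + 1)) * ((t : ℕ) : ℝ)))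
      else
        ((t : ℕ) : ℝ) * (2 / ((2 * (M : ℝ) - (((t : ℕ) : ℝ) + 1)) * ((t : ℕ) : ℝ)))) :
    S.extremePoints ℝ = Set.range v := by
  have hM1 : 1 ≤ M := by omega
  -- v = VV M
  have hveq : v = VV M := by
    rw [hv]
    funext t i
    unfold VV rr
    by_cases h0 : (t:ℕ) = 0
    · rw [if_pos h0, if_pos h0]
    · rw [if_neg h0, if_neg h0]
      by_cases hit : (i:ℕ) ≤ (t:ℕ)
      · rw [if_pos hit, min_eq_left hit]
      · rw [if_neg hit, min_eq_right (by omega)]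
  rw [hveq]
  -- membership of the vertices
  have hVS : ∀ t : Fin M, VV M t ∈ S := by
    intro t
    rw [hS]
    exact ⟨sum_VV M hM1 t, VV_nonneg M hM1 t, VV_conc M hM t, VV_mono M hM1 t⟩
  -- S is convex
  have hSconv : Convex ℝ S := by
    rw [hS]
    intro x hx y hy a b ha hb hab
    obtain ⟨hx1, hx2, hx3, hx4⟩ := hx
    obtain ⟨hy1, hy2, hy3, hy4⟩ := hy
    have hz : ∀ i, (a • x + b • y) i = a * x i + b * y i := fun i => rfl
    refine ⟨?_, ?_, ?_, ?_⟩
    · simp only [hz]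
      rw [Finset.sum_add_distrib, ← Finset.mul_sum, ← Finset.mul_sum, hx1, hy1]
      linarith
    · intro i
      simp only [hz]
      have := hx2 i; have := hy2 i
      positivity
    · intro i h1 h2
      simp only [hz]
      have := hx3 i h1 h2
      have := hy3 i h1 h2
      nlinarith
    · intro i j hij
      simp only [hz]
      have := hx4 i j hij
      have := hy4 i j hij
      nlinarith
  -- representation with weights summing to 1
  have hSrepr : ∀ w ∈ S, ∃ lam : Fin M → ℝ, (∀ t, 0 ≤ lam t) ∧ (∑ t, lam t = 1) ∧
      (∀ i, ∑ t, lam t * VV M t i = w i) := by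
    intro w hw
    rw [hS] at hw
    obtain ⟨hw1, hw2, hw3, hw4⟩ := hw
    obtain ⟨lam, hlnn, hlrep⟩ := repr_lemma M hM w hw2 hw3 hw4
    refine ⟨lam, hlnn, ?_, hlrep⟩
    have : ∑ i : Fin M, ∑ t : Fin M, lam t * VV M t i = 1 := by
      rw [Finset.sum_congr rfl fun i _ => hlrep i]; exact hw1
    rw [Finset.sum_comm] at this
    calc ∑ t, lam t = ∑ t : Fin M, lam t * ∑ i, VV M t i := by
          refine Finset.sum_congr rfl fun t _ => ?_
          rw [sum_VV M hM1 t, mul_one]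
      _ = 1 := by
          rw [← this]
          exact Finset.sum_congr rfl fun t _ => Finset.mul_sum _ _ _
  -- S = convexHull of range VV
  have hSA : S = convexHull ℝ (Set.range (VV M)) := by
    apply Set.Subset.antisymm
    · intro w hw
      obtain ⟨lam, hlnn, hlsum, hlrep⟩ := hSrepr w hw
      have hwsum : w = ∑ t, lam t • VV M t := by
        funext i
        rw [Finset.sum_apply]
        simp only [Pi.smul_apply, smul_eq_mul]
        exact (hlrep i).symm
      rw [hwsum]
      exact (convex_convexHull ℝ _).sum_mem (fun t _ => hlnn t) hlsum
        (fun t _ => subset_convexHull ℝ _ (Set.mem_range_self t))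
    · exact convexHull_min (Set.range_subset_iff.2 hVS) hSconv
  apply Set.Subset.antisymm
  · rw [hSA]
    exact extremePoints_convexHull_subset
  · rintro x ⟨t, rfl⟩
    refine ⟨hVS t, ?_⟩
    rintro x1 hx1 x2 hx2 ⟨a, b, ha, hb, hab, hsum⟩
    obtain ⟨l1, hl1nn, hl1sum, hl1rep⟩ := hSrepr x1 hx1
    obtain ⟨l2, hl2nn, hl2sum, hl2rep⟩ := hSrepr x2 hx2
    set c : Fin M → ℝ := fun s => a * l1 s + b * l2 s - (if s = t then 1 else 0) with hc
    have hczero : ∀ s, c s = 0 := by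
      apply uniq M hM
      intro i
      have e1 : ∑ s, c s * VV M s i
          = a * (∑ s, l1 s * VV M s i) + b * (∑ s, l2 s * VV M s i)
            - ∑ s, (if s = t then 1 else 0) * VV M s i := by
        rw [Finset.mul_sum, Finset.mul_sum, ← Finset.sum_add_distrib, ← Finset.sum_sub_distrib]
        refine Finset.sum_congr rfl fun s _ => ?_
        simp only [hc]; ring
      have e2 : ∑ s, (if s = t then 1 else 0) * VV M s i = VV M t i := by
        simp only [ite_mul, one_mul, zero_mul, Finset.sum_ite_eq', Finset.mem_univ, if_true]
      have e3 : a * x1 i + b * x2 i = VV M t i := by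
        have := congrFun hsum i
        simpa using this
      rw [e1, e2, hl1rep, hl2rep, e3]
      ring
    -- coefficients away from t vanish
    have hvan : ∀ s : Fin M, s ≠ t → l1 s = 0 ∧ l2 s = 0 := by
      intro s hst
      have := hczero s
      simp only [hc, if_neg hst, sub_zero] at this
      have h1 := hl1nn s; have h2 := hl2nn s
      constructor <;> nlinarith
    have hl1t : l1 t = 1 := by
      have : ∑ s, l1 s = l1 t := by
        rw [Finset.sum_eq_single t]
        · intro s _ hst; exact (hvan s hst).1
        · intro hn; exact absurd (Finset.mem_univ _) hn
      linarith [hl1sum, this]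
    have hl2t : l2 t = 1 := by
      have : ∑ s, l2 s = l2 t := by
        rw [Finset.sum_eq_single t]
        · intro s _ hst; exact (hvan s hst).2
        · intro hn; exact absurd (Finset.mem_univ _) hn
      linarith [hl2sum, this]
    refine (⟨?_, ?_⟩ : x1 = VV M t ∧ x2 = VV M t).1
    · funext i
      rw [← hl1rep i, Finset.sum_eq_single t]
      · rw [hl1t, one_mul]
      · intro s _ hst; rw [(hvan s hst).1, zero_mul]
      · intro hn; exact absurd (Finset.mem_univ _) hn
    · funext i
      rw [← hl2rep i, Finset.sum_eq_single t]
      · rw [hl2t, one_mul]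
      · intro s _ hst; rw [(hvan s hst).2, zero_mul]
      · intro hn; exact absurd (Finset.mem_univ _) hn
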